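/- arXiv:2308.08631 — 5 statements merged into one kernel-verified Lean document; each statement's English description precedes it below -/
import Mathlib

section
/- Given a real n_y×n_s matrix R_s with rank(R_s) = n_s = n_y and a real n_y×n_f matrix R_f with rank(R_f) = n_f ≤ n_y, there exist an invertible real n_y×n_y matrix X, real orthogonal matrices U_s (n_s×n_s) and U_f (n_f×n_f), and diagonal n_f×n_f matrices Σ_s = diag(σ_{s,1},…,σ_{s,n_f}) and Σ_f = diag(σ_{f,1},…,σ_{f,n_f}) with strictly positive diagonal entries satisfying σ_{s,i}² + σ_{f,i}² = 1 for every i, such that R_s = X·[[Σ_s, 0],[0, I_{n_y−n_f}]]·U_sᵀ and R_f = X·[[Σ_f],[0]]·U_fᵀ. -/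
/-!
Since `R_s` is invertible, `M = R_s⁻¹ R_f` has full column rank, so it has a thin singular
value decomposition `M = Q Σ U_fᵀ` with `Σ = diag s`, `s > 0`. Completing the orthonormal
columns `Q` to an orthogonal `U_s = [Q Q₂]` gives `M = U_s [Σ; 0] U_fᵀ`. Writing `s_i = tan θ_i` with
`θ_i ∈ (0, π/2)`, put `σ_{s,i} = cos θ_i`, `σ_{f,i} = sin θ_i` and `D = [[diag σ_s, 0], [0, I]]`;
then `D [Σ; 0] = [diag σ_f; 0]`, and `X = R_s U_s D⁻¹` does the job.
-/

open Matrix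

namespace Matrix

variable {m n k : Type*}

theorem mulVec_injective_of_rank_eq_card [Fintype n] {K : Type*} [Field K] (A : Matrix m n K)
    (hA : A.rank = Fintype.card n) : Function.Injective A.mulVec := by
  have hrange : Module.finrank K (LinearMap.range A.mulVecLin) = Fintype.card n := hA
  have hker : Module.finrank K (LinearMap.ker A.mulVecLin) = 0 := by
    have := LinearMap.finrank_range_add_finrank_ker A.mulVecLin
    rw [Module.finrank_fintype_fun_eq_card] at this
    omega
  exact LinearMap.ker_eq_bot.mp (Submodule.finrank_eq_zero.mp hker)

theorem IsHermitian.transpose_eigenvectorUnitary_mul_mul [Fintype n] [DecidableEq n]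
    {A : Matrix n n ℝ} (hA : A.IsHermitian) :
    (hA.eigenvectorUnitary : Matrix n n ℝ)ᵀ * A * hA.eigenvectorUnitary =
      diagonal hA.eigenvalues := by
  simpa [star_eq_conjTranspose] using hA.conjStarAlgAut_star_eigenvectorUnitary

theorem exists_thin_svd_of_mulVec_injective [Fintype m] [Fintype n] [DecidableEq n]
    (M : Matrix m n ℝ) (hM : Function.Injective M.mulVec) :
    ∃ (Q : Matrix m n ℝ) (V : Matrix n n ℝ) (s : n → ℝ),
      Qᵀ * Q = 1 ∧ Vᵀ * V = 1 ∧ (∀ i, 0 < s i) ∧ M = Q * diagonal s * Vᵀ := by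
  have hA : (Mᵀ * M).PosDef := by simpa using PosDef.conjTranspose_mul_self M hM
  set V : Matrix n n ℝ := ↑hA.isHermitian.eigenvectorUnitary
  set μ := hA.isHermitian.eigenvalues
  have hV : V ∈ orthogonalGroup n ℝ := hA.isHermitian.eigenvectorUnitary.2
  have hdiag : Vᵀ * (Mᵀ * M) * V = diagonal μ :=
    hA.isHermitian.transpose_eigenvectorUnitary_mul_mul
  set s : n → ℝ := fun i => √(μ i)
  have hs : ∀ i, 0 < s i := fun i => Real.sqrt_pos.2 (hA.eigenvalues_pos i)
  refine ⟨M * V * diagonal s⁻¹, V, s, ?_, (mem_orthogonalGroup_iff' n ℝ).mp hV, hs, ?_⟩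
  · calc (M * V * diagonal s⁻¹)ᵀ * (M * V * diagonal s⁻¹)
        = diagonal s⁻¹ * (Vᵀ * (Mᵀ * M) * V) * diagonal s⁻¹ := by
          simp only [transpose_mul, diagonal_transpose, Matrix.mul_assoc]
      _ = 1 := by
          rw [hdiag, diagonal_mul_diagonal, diagonal_mul_diagonal, ← diagonal_one]
          congr! with i
          have hsq : s i ^ 2 = μ i := Real.sq_sqrt (hA.eigenvalues_pos i).le
          rw [Pi.inv_apply, ← hsq]
          field_simp [(hs i).ne']
  · have hss : diagonal s⁻¹ * diagonal s = 1 := by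
      rw [diagonal_mul_diagonal, ← diagonal_one]
      congr! with i
      exact inv_mul_cancel₀ (hs i).ne'
    rw [Matrix.mul_assoc (M * V), hss, Matrix.mul_one, Matrix.mul_assoc,
      (mem_orthogonalGroup_iff n ℝ).mp hV, Matrix.mul_one]

theorem orthonormal_toLp_col_of_transpose_mul_self_eq_one [Fintype m] [DecidableEq n]
    {Q : Matrix m n ℝ} (hQ : Qᵀ * Q = 1) :
    Orthonormal ℝ fun j => WithLp.toLp 2 (Qᵀ j) := by
  rw [← gram_eq_one_iff_orthonormal, ← hQ]
  ext i j
  simp [gram_apply, mul_apply, PiLp.inner_apply, mul_comm]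

theorem exists_fromCols_transpose_mul_self_eq_one [Fintype m] [Fintype n] [Fintype k]
    [DecidableEq n] [DecidableEq k] (Q : Matrix m n ℝ) (hQ : Qᵀ * Q = 1)
    (hcard : Fintype.card m = Fintype.card n + Fintype.card k) :
    ∃ Q₂ : Matrix m k ℝ, (fromCols Q Q₂)ᵀ * fromCols Q Q₂ = 1 := by
  classical
  set v : n ⊕ k → EuclideanSpace ℝ m := Sum.elim (fun j => WithLp.toLp 2 (Qᵀ j)) 0
  have hv : Orthonormal ℝ ((Set.range Sum.inl).domRestrict v) := by
    rw [orthonormal_iff_ite]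
    rintro ⟨_, j, rfl⟩ ⟨_, j', rfl⟩
    simpa [v, Set.domRestrict, Subtype.ext_iff] using
      orthonormal_iff_ite.mp (orthonormal_toLp_col_of_transpose_mul_self_eq_one hQ) j j'
  obtain ⟨b, hb⟩ := hv.exists_orthonormalBasis_extension_of_card_eq (by simp [hcard])
  refine ⟨of fun i j => b (Sum.inr j) i, ?_⟩
  have hU : fromCols Q (of fun i j => b (Sum.inr j) i) =
      (EuclideanSpace.basisFun m ℝ).toBasis.toMatrix b := by
    ext i (j | j)
    · simp [Module.Basis.toMatrix_apply, hb (Sum.inl j) ⟨j, rfl⟩, v]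
    · simp [Module.Basis.toMatrix_apply]
  rw [hU, ← conjTranspose_eq_transpose_of_trivial]
  exact (EuclideanSpace.basisFun m ℝ).toMatrix_orthonormalBasis_conjTranspose_mul_self b

theorem isUnit_det_fromBlocks_diagonal_one [Fintype n] [Fintype k] [DecidableEq n]
    [DecidableEq k] {K : Type*} [Field K] {c : n → K} (hc : ∀ i, c i ≠ 0) :
    IsUnit (fromBlocks (diagonal c) 0 0 (1 : Matrix k k K)).det := by
  rw [det_fromBlocks_zero₂₁, det_one, mul_one, det_diagonal]
  exact (Finset.prod_ne_zero_iff.mpr fun i _ => hc i).isUnit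

theorem fromBlocks_diagonal_one_mul_fromRows_diagonal_zero [Fintype n] [Fintype k]
    [DecidableEq n] [DecidableEq k] {R : Type*} [Semiring R] (c s : n → R) :
    fromBlocks (diagonal c) 0 0 (1 : Matrix k k R) * fromRows (diagonal s) (0 : Matrix k n R) =
      fromRows (diagonal (c * s)) 0 := by
  simp [fromBlocks_mul_fromRows, diagonal_mul_diagonal, Pi.mul_def]

end Matrix

theorem Real.cos_arctan_mul (x : ℝ) :
    Real.cos (Real.arctan x) * x = Real.sin (Real.arctan x) := by
  rw [Real.sin_arctan, Real.cos_arctan, one_div_mul_eq_div]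

/-- **GSVD existence** (Theorem 1 of the paper, adapted to spatial response
matrices). Here the output dimension is `n_y = nf + k`, realised as the index
type `Fin nf ⊕ Fin k`; the slow array has `n_s = n_y` actuators and the fast
array has `n_f = nf ≤ n_y` actuators. -/
theorem gsvd_existence (nf k : ℕ)
    (Rs : Matrix (Fin nf ⊕ Fin k) (Fin nf ⊕ Fin k) ℝ)
    (Rf : Matrix (Fin nf ⊕ Fin k) (Fin nf) ℝ)
    (hRs : Rs.rank = nf + k) (hRf : Rf.rank = nf) :
    ∃ (X Us : Matrix (Fin nf ⊕ Fin k) (Fin nf ⊕ Fin k) ℝ)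
      (Uf : Matrix (Fin nf) (Fin nf) ℝ) (σs σf : Fin nf → ℝ),
      IsUnit X ∧
      Usᵀ * Us = 1 ∧
      Ufᵀ * Uf = 1 ∧
      (∀ i, 0 < σs i) ∧
      (∀ i, 0 < σf i) ∧
      (∀ i, σs i ^ 2 + σf i ^ 2 = 1) ∧
      Rs = X * fromBlocks (diagonal σs) 0 0 (1 : Matrix (Fin k) (Fin k) ℝ) * Usᵀ ∧
      Rf = X * fromRows (diagonal σf) (0 : Matrix (Fin k) (Fin nf) ℝ) * Ufᵀ := by
  have hRsdet : IsUnit Rs.det := (isUnit_iff_isUnit_det Rs).mp <|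
    mulVec_injective_iff_isUnit.mp (Rs.mulVec_injective_of_rank_eq_card (by simpa using hRs))
  have hMrank : (Rs⁻¹ * Rf).rank = Fintype.card (Fin nf) := by
    rw [rank_mul_eq_right_of_isUnit_det _ _ (isUnit_nonsing_inv_det _ hRsdet), hRf,
      Fintype.card_fin]
  obtain ⟨Q, Uf, s, hQ, hUf, hs, hsvd⟩ :=
    exists_thin_svd_of_mulVec_injective _ (mulVec_injective_of_rank_eq_card _ hMrank)
  obtain ⟨Q₂, hUs⟩ := exists_fromCols_transpose_mul_self_eq_one (k := Fin k) Q hQ (by simp)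
  set σs : Fin nf → ℝ := fun i => Real.cos (Real.arctan (s i))
  set σf : Fin nf → ℝ := fun i => Real.sin (Real.arctan (s i))
  set D := fromBlocks (diagonal σs) 0 0 (1 : Matrix (Fin k) (Fin k) ℝ)
  set G := fromRows (diagonal s) (0 : Matrix (Fin k) (Fin nf) ℝ)
  have hD : IsUnit D.det := isUnit_det_fromBlocks_diagonal_one fun i => (Real.cos_arctan_pos _).ne'
  have hDG : D * G = fromRows (diagonal σf) 0 := by
    rw [fromBlocks_diagonal_one_mul_fromRows_diagonal_zero]
    simp only [Pi.mul_def, σs, σf, Real.cos_arctan_mul]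
  refine ⟨Rs * fromCols Q Q₂ * D⁻¹, fromCols Q Q₂, Uf, σs, σf,
    ?_, hUs, hUf, fun i => Real.cos_arctan_pos _, fun i => Real.sin_arctan_pos.2 (hs i),
    fun i => Real.cos_sq_add_sin_sq _, ?_, ?_⟩
  · rw [isUnit_iff_isUnit_det, det_mul, det_mul]
    exact (hRsdet.mul (isUnit_iff_isUnit_det _ |>.mp (.of_mul_eq_one_right _ hUs))).mul
      (isUnit_nonsing_inv_det D hD)
  · rw [nonsing_inv_mul_cancel_right D _ hD, Matrix.mul_assoc, mul_eq_one_comm.mp hUs,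
      Matrix.mul_one]
  · calc Rf = Rs * (Rs⁻¹ * Rf) := (mul_nonsing_inv_cancel_left _ _ hRsdet).symm
      _ = Rs * fromCols Q Q₂ * G * Ufᵀ := by
          simp [hsvd, G, fromCols_mul_fromRows, Matrix.mul_assoc]
      _ = Rs * fromCols Q Q₂ * D⁻¹ * (D * G) * Ufᵀ := by
          rw [← Matrix.mul_assoc _ D, nonsing_inv_mul_cancel_right D _ hD]
      _ = _ := by rw [hDG]
end

section
/- Let (X, U_s, U_f, Σ_s, Σ_f) be a GSVD factorization of (R_s, R_f). For any index i ∈ {1,…,n_f}, let x_i be the i-th column of X and set y_i = (X·Xᵀ)⁻¹·x_i. Then ‖R_sᵀ·y_i‖ ≠ 0, ‖R_fᵀ·y_i‖ ≠ 0, and the gradient expression ∇f(y) := (1/‖R_fᵀy‖²)·(R_s R_sᵀ y − (‖R_sᵀy‖²/‖R_fᵀy‖²)·R_f R_fᵀ y) + (1/‖R_sᵀy‖²)·(R_f R_fᵀ y − (‖R_fᵀy‖²/‖R_sᵀy‖²)·R_s R_sᵀ y) vanishes at y = y_i, i.e., ∇f(y_i) = 0. -/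
/-! Since `Xᵀ yᵢ = eᵢ` and the orthogonal factors cancel in `R Rᵀ = X D Dᵀ Xᵀ`, where `D Dᵀ` is
diagonal with `i`-th entry `σᵢ²`, both `R_s R_sᵀ yᵢ = σ_{s,i}² xᵢ` and `R_f R_fᵀ yᵢ = σ_{f,i}² xᵢ`
are multiples of the same vector `xᵢ`, and `‖Rᵀyᵢ‖² = yᵢᵀ R Rᵀ yᵢ = σᵢ²`. Each of the two terms
of `∇f(yᵢ)` is then `xᵢ` times a coefficient that cancels to zero. -/

open Matrix

namespace Matrix

variable {n m p K : Type*} [Fintype n] [Fintype m] [Fintype p] [CommRing K]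

theorem transpose_mulVec_inv_mul_transpose_mulVec [DecidableEq n] {X : Matrix n n K}
    (hX : IsUnit X) (v : n → K) : Xᵀ *ᵥ ((X * Xᵀ)⁻¹ *ᵥ (X *ᵥ v)) = v := by
  have hXdet : IsUnit X.det := (isUnit_iff_isUnit_det X).mp hX
  have hXTdet : IsUnit Xᵀ.det := by rwa [det_transpose]
  rw [mulVec_mulVec, mulVec_mulVec, mul_inv_rev, ← Matrix.mul_assoc,
    mul_nonsing_inv _ hXTdet, Matrix.one_mul, nonsing_inv_mul _ hXdet, one_mulVec]

theorem mul_transpose_eq_of_eq_mul_mul_transpose [DecidableEq p] {A : Matrix n m K}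
    {X : Matrix n n K} {D : Matrix n p K} {U : Matrix m p K} (hU : Uᵀ * U = 1)
    (hA : A = X * D * Uᵀ) : A * Aᵀ = X * (D * Dᵀ) * Xᵀ := by
  rw [hA, transpose_mul, transpose_mul, transpose_transpose]
  simp only [Matrix.mul_assoc]
  rw [← Matrix.mul_assoc Uᵀ U, hU, Matrix.one_mul]

theorem sum_sq_transpose_mulVec (A : Matrix n m K) (y : n → K) :
    ∑ j, (Aᵀ *ᵥ y) j ^ 2 = y ⬝ᵥ ((A * Aᵀ) *ᵥ y) := by
  rw [← mulVec_mulVec, dotProduct_mulVec, ← mulVec_transpose]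
  simp only [dotProduct, sq]

theorem fromBlocks_diagonal_one_mul_transpose [DecidableEq n] {l : Type*} [Fintype l]
    [DecidableEq l] (d : n → K) :
    fromBlocks (diagonal d) 0 0 (1 : Matrix l l K) * (fromBlocks (diagonal d) 0 0 1)ᵀ =
      diagonal (Sum.elim (fun j => d j ^ 2) 1) := by
  rw [← diagonal_one, fromBlocks_diagonal, diagonal_transpose, diagonal_mul_diagonal]
  congr 1
  ext (j | j) <;> simp [sq]

theorem fromRows_diagonal_zero_mul_transpose [DecidableEq n] {l : Type*} [DecidableEq l]
    (d : n → K) :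
    fromRows (diagonal d) (0 : Matrix l n K) * (fromRows (diagonal d) 0)ᵀ =
      diagonal (Sum.elim (fun j => d j ^ 2) 0) := by
  rw [transpose_fromRows, fromRows_mul_fromCols, diagonal_transpose, diagonal_mul_diagonal]
  simp only [transpose_zero, Matrix.mul_zero, Matrix.zero_mul, ← sq]
  rw [← diagonal_zero, fromBlocks_diagonal]
  rfl

theorem mul_transpose_mulVec_eq_smul_col [DecidableEq n] [DecidableEq p] {A : Matrix n m K}
    {X : Matrix n n K} {D : Matrix n p K} {U : Matrix m p K} {d y : n → K} {j : n}
    (hU : Uᵀ * U = 1) (hD : D * Dᵀ = diagonal d) (hA : A = X * D * Uᵀ) (hy : Xᵀ *ᵥ y = Pi.single j 1) :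
    (A * Aᵀ) *ᵥ y = d j • X.col j := by
  rw [mul_transpose_eq_of_eq_mul_mul_transpose hU hA, hD, ← mulVec_mulVec, ← mulVec_mulVec, hy,
    diagonal_mulVec_single, ← smul_eq_mul, Pi.single_smul, mulVec_smul, mulVec_single_one]

theorem sum_sq_transpose_mulVec_eq [DecidableEq n] [DecidableEq p] {A : Matrix n m K}
    {X : Matrix n n K} {D : Matrix n p K} {U : Matrix m p K} {d y : n → K} {j : n}
    (hU : Uᵀ * U = 1) (hD : D * Dᵀ = diagonal d) (hA : A = X * D * Uᵀ) (hy : Xᵀ *ᵥ y = Pi.single j 1) :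
    ∑ k, (Aᵀ *ᵥ y) k ^ 2 = d j := by
  rw [sum_sq_transpose_mulVec, mul_transpose_mulVec_eq_smul_col hU hD hA hy, dotProduct_smul,
    ← mulVec_single_one, dotProduct_mulVec, ← mulVec_transpose, hy, dotProduct_single,
    Pi.single_eq_same, mul_one, smul_eq_mul, mul_one]

end Matrix

section GainRatio

variable {𝕜 V : Type*} [Field 𝕜] [AddCommGroup V] [Module 𝕜 V]

/-- `∇f(y)` with `a = ‖R_sᵀy‖²`, `b = ‖R_fᵀy‖²`, `u = R_s R_sᵀ y`, `v = R_f R_fᵀ y`. -/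
def gainRatioGrad (a b : 𝕜) (u v : V) : V :=
  (1 / b) • (u - (a / b) • v) + (1 / a) • (v - (b / a) • u)

theorem gainRatioGrad_smul_smul {a b : 𝕜} (ha : a ≠ 0) (hb : b ≠ 0) (x : V) :
    gainRatioGrad a b (a • x) (b • x) = 0 := by
  simp only [gainRatioGrad, smul_smul, div_mul_cancel₀ _ ha, div_mul_cancel₀ _ hb, sub_self,
    smul_zero, add_zero]

end GainRatio

theorem gsvd_gradient_vanishes_general (nf k : ℕ)
    (Rs : Matrix (Fin nf ⊕ Fin k) (Fin nf ⊕ Fin k) ℝ)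
    (Rf : Matrix (Fin nf ⊕ Fin k) (Fin nf) ℝ)
    (X Us : Matrix (Fin nf ⊕ Fin k) (Fin nf ⊕ Fin k) ℝ)
    (Uf : Matrix (Fin nf) (Fin nf) ℝ) (σs σf : Fin nf → ℝ)
    (hX : IsUnit X)
    (hUs : Usᵀ * Us = 1)
    (hUf : Ufᵀ * Uf = 1)
    (hσs : ∀ i, 0 < σs i)
    (hσf : ∀ i, 0 < σf i)
    (hRsX : Rs = X * fromBlocks (diagonal σs) 0 0 (1 : Matrix (Fin k) (Fin k) ℝ) * Usᵀ)
    (hRfX : Rf = X * fromRows (diagonal σf) (0 : Matrix (Fin k) (Fin nf) ℝ) * Ufᵀ)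
    (i : Fin nf)
    (y : (Fin nf ⊕ Fin k) → ℝ)
    (hy : y = (X * Xᵀ)⁻¹.mulVec fun j => X j (Sum.inl i)) :
    (∑ j, Rsᵀ.mulVec y j ^ 2) ≠ 0 ∧
    (∑ j, Rfᵀ.mulVec y j ^ 2) ≠ 0 ∧
    (1 / ∑ j, Rfᵀ.mulVec y j ^ 2) •
        ((Rs * Rsᵀ).mulVec y -
          ((∑ j, Rsᵀ.mulVec y j ^ 2) / ∑ j, Rfᵀ.mulVec y j ^ 2) • (Rf * Rfᵀ).mulVec y)
      + (1 / ∑ j, Rsᵀ.mulVec y j ^ 2) •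
        ((Rf * Rfᵀ).mulVec y -
          ((∑ j, Rfᵀ.mulVec y j ^ 2) / ∑ j, Rsᵀ.mulVec y j ^ 2) • (Rs * Rsᵀ).mulVec y)
      = 0 := by
  have hcol : (fun j => X j (Sum.inl i)) = X *ᵥ Pi.single (Sum.inl i) 1 :=
    (mulVec_single_one X _).symm
  have hXy : Xᵀ *ᵥ y = Pi.single (Sum.inl i) 1 := by
    rw [hy, hcol, transpose_mulVec_inv_mul_transpose_mulVec hX]
  have hDs := fromBlocks_diagonal_one_mul_transpose (l := Fin k) σs
  have hDf := fromRows_diagonal_zero_mul_transpose (l := Fin k) σf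
  have hSs := mul_transpose_mulVec_eq_smul_col hUs hDs hRsX hXy
  have hSf := mul_transpose_mulVec_eq_smul_col hUf hDf hRfX hXy
  have hNs := sum_sq_transpose_mulVec_eq hUs hDs hRsX hXy
  have hNf := sum_sq_transpose_mulVec_eq hUf hDf hRfX hXy
  simp only [Sum.elim_inl] at hSs hSf hNs hNf
  have hs : σs i ^ 2 ≠ 0 := pow_ne_zero 2 (hσs i).ne'
  have hf : σf i ^ 2 ≠ 0 := pow_ne_zero 2 (hσf i).ne'
  rw [hNs, hNf, hSs, hSf]
  exact ⟨hs, hf, gainRatioGrad_smul_smul hs hf _⟩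

/-- **Lemma 2 of the paper (first part).** For each TISO index `i` (i.e. a
column of `X` in the intersection subspace), the vector
`yᵢ = (X·Xᵀ)⁻¹·xᵢ` has `‖Rsᵀyᵢ‖² ≠ 0`, `‖Rfᵀyᵢ‖² ≠ 0` and the gradient of the
gain-ratio function `f` vanishes at `yᵢ`. Squared Euclidean norms are written
as sums of squares. -/
theorem gsvd_gradient_vanishes (nf k : ℕ)
    (Rs : Matrix (Fin nf ⊕ Fin k) (Fin nf ⊕ Fin k) ℝ)
    (Rf : Matrix (Fin nf ⊕ Fin k) (Fin nf) ℝ)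
    (hRs : Rs.rank = nf + k) (hRf : Rf.rank = nf)
    (X Us : Matrix (Fin nf ⊕ Fin k) (Fin nf ⊕ Fin k) ℝ)
    (Uf : Matrix (Fin nf) (Fin nf) ℝ) (σs σf : Fin nf → ℝ)
    (hX : IsUnit X)
    (hUs : Usᵀ * Us = 1)
    (hUf : Ufᵀ * Uf = 1)
    (hσs : ∀ i, 0 < σs i)
    (hσf : ∀ i, 0 < σf i)
    (hσ : ∀ i, σs i ^ 2 + σf i ^ 2 = 1)
    (hRsX : Rs = X * fromBlocks (diagonal σs) 0 0 (1 : Matrix (Fin k) (Fin k) ℝ) * Usᵀ)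
    (hRfX : Rf = X * fromRows (diagonal σf) (0 : Matrix (Fin k) (Fin nf) ℝ) * Ufᵀ)
    (i : Fin nf)
    (y : (Fin nf ⊕ Fin k) → ℝ)
    (hy : y = (X * Xᵀ)⁻¹.mulVec fun j => X j (Sum.inl i)) :
    (∑ j, Rsᵀ.mulVec y j ^ 2) ≠ 0 ∧
    (∑ j, Rfᵀ.mulVec y j ^ 2) ≠ 0 ∧
    (1 / ∑ j, Rfᵀ.mulVec y j ^ 2) •
        ((Rs * Rsᵀ).mulVec y -
          ((∑ j, Rsᵀ.mulVec y j ^ 2) / ∑ j, Rfᵀ.mulVec y j ^ 2) • (Rf * Rfᵀ).mulVec y)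
      + (1 / ∑ j, Rsᵀ.mulVec y j ^ 2) •
        ((Rf * Rfᵀ).mulVec y -
          ((∑ j, Rfᵀ.mulVec y j ^ 2) / ∑ j, Rsᵀ.mulVec y j ^ 2) • (Rs * Rsᵀ).mulVec y)
      = 0 :=
  gsvd_gradient_vanishes_general nf k Rs Rf X Us Uf σs σf hX hUs hUf hσs hσf hRsX hRfX i y hy
end

section
/- Let X be an invertible real n×n matrix, let W be a symmetric positive definite real n×n matrix, and for μ > 0 define Γ(μ) = X·(XᵀWX + μI)⁻¹·(WX)ᵀ. Then 0 < det(Γ(μ)) < 1 for every μ > 0, and the function μ ↦ det(Γ(μ)) is strictly decreasing on (0, ∞). -/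
/-!
With `A = XᵀWX`, which is positive definite, multiplicativity of the determinant gives
`det Γ(μ) = det A / det (A + μI)`. If `λᵢ > 0` are the eigenvalues of `A`, then
`det (A + μI) = ∏ (λᵢ + μ)`, which is positive and strictly increasing in `μ ≥ 0`.
-/

open Matrix

namespace Matrix

variable {n : Type*} [Fintype n] [DecidableEq n]

theorem IsHermitian.det_add_smul_one {𝕜 : Type*} [RCLike 𝕜] {A : Matrix n n 𝕜}
    (hA : A.IsHermitian) (μ : 𝕜) :
    (A + μ • (1 : Matrix n n 𝕜)).det = ∏ i, ((hA.eigenvalues i : 𝕜) + μ) := by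
  have hneg : A + μ • (1 : Matrix n n 𝕜) = -(scalar n (-μ) - A) := by
    rw [scalar_apply, ← smul_one_eq_diagonal]; simp [neg_smul]
  rw [hneg, det_neg, ← eval_charpoly, hA.charpoly_eq, Polynomial.eval_prod]
  simp only [Polynomial.eval_sub, Polynomial.eval_X, Polynomial.eval_C]
  rw [← Finset.card_univ, ← Finset.prod_const, ← Finset.prod_mul_distrib]
  exact Finset.prod_congr rfl fun i _ => by ring

variable {A : Matrix n n ℝ}

theorem PosDef.det_add_smul_one_pos (hA : A.PosDef) {μ : ℝ} (hμ : 0 ≤ μ) :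
    0 < (A + μ • (1 : Matrix n n ℝ)).det := by
  rw [hA.isHermitian.det_add_smul_one]
  exact Finset.prod_pos fun i _ => by
    simpa using add_pos_of_pos_of_nonneg (hA.eigenvalues_pos i) hμ

theorem PosDef.strictMonoOn_det_add_smul_one [Nonempty n] (hA : A.PosDef) :
    StrictMonoOn (fun μ : ℝ => (A + μ • (1 : Matrix n n ℝ)).det) (Set.Ici 0) := by
  intro μ hμ ν _ hμν
  simp only [hA.isHermitian.det_add_smul_one]
  exact Finset.prod_lt_prod_of_nonempty
    (fun i _ => by simpa using add_pos_of_pos_of_nonneg (hA.eigenvalues_pos i) hμ)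
    (fun i _ => by simpa using hμν) Finset.univ_nonempty

end Matrix

theorem det_mul_inv_mul_transpose_mul {n K : Type*} [Fintype n] [DecidableEq n] [Field K]
    (X W B : Matrix n n K) :
    (X * B⁻¹ * (W * X)ᵀ).det = (Xᵀ * W * X).det / B.det := by
  simp only [det_mul, det_transpose, det_nonsing_inv, Ring.inverse_eq_inv']
  ring

/-- **Core of Lemma 4 of the paper.** For invertible `X`, symmetric positive
definite `W` and `Γ(μ) = X·(XᵀWX + μI)⁻¹·(WX)ᵀ`, the determinant of `Γ(μ)`
lies strictly between `0` and `1` for every `μ > 0`, and `μ ↦ det(Γ(μ))` is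
strictly decreasing on `(0, ∞)`. -/
theorem det_output_compensator (n : ℕ) (hn : 0 < n)
    (X W : Matrix (Fin n) (Fin n) ℝ) (hX : IsUnit X) (hW : W.PosDef) :
    (∀ μ : ℝ, 0 < μ →
      0 < (X * (Xᵀ * W * X + μ • (1 : Matrix (Fin n) (Fin n) ℝ))⁻¹ * (W * X)ᵀ).det ∧
      (X * (Xᵀ * W * X + μ • (1 : Matrix (Fin n) (Fin n) ℝ))⁻¹ * (W * X)ᵀ).det < 1) ∧
    StrictAntiOn
      (fun μ : ℝ =>
        (X * (Xᵀ * W * X + μ • (1 : Matrix (Fin n) (Fin n) ℝ))⁻¹ * (W * X)ᵀ).det)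
      (Set.Ioi 0) := by
  have : Nonempty (Fin n) := Fin.pos_iff_nonempty.mp hn
  have hA : (Xᵀ * W * X).PosDef := by
    simpa using hW.conjTranspose_mul_mul_same (mulVec_injective_of_isUnit hX)
  set p : ℝ → ℝ := fun μ => (Xᵀ * W * X + μ • (1 : Matrix (Fin n) (Fin n) ℝ)).det
  have hp_pos : ∀ μ : ℝ, 0 ≤ μ → 0 < p μ := fun μ hμ => hA.det_add_smul_one_pos hμ
  have hp_mono : StrictMonoOn p (Set.Ici 0) := hA.strictMonoOn_det_add_smul_one
  have hdet : ∀ μ : ℝ, (X * (Xᵀ * W * X + μ • (1 : Matrix (Fin n) (Fin n) ℝ))⁻¹ * (W * X)ᵀ).det =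
      p 0 / p μ := by
    intro μ
    rw [det_mul_inv_mul_transpose_mul]
    simp [p]
  refine ⟨fun μ hμ => ?_, fun μ hμ ν hν hμν => ?_⟩
  · rw [hdet, div_lt_one (hp_pos μ hμ.le)]
    exact ⟨div_pos (hp_pos 0 le_rfl) (hp_pos μ hμ.le),
      hp_mono Set.self_mem_Ici (Set.mem_Ici.mpr hμ.le) hμ⟩
  · simp only [hdet]
    exact div_lt_div_of_pos_left (hp_pos 0 le_rfl) (hp_pos μ hμ.le)
      (hp_mono (Set.mem_Ici.mpr hμ.le) (Set.mem_Ici.mpr hν.le) hμν)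
end

section
/- Let R_s be a real n_y×n_s matrix with rank(R_s) = n_s = n_y, let R_f be a real n_y×n_f matrix with rank(R_f) = n_f ≤ n_y, let (X, U_s, U_f, Σ_s, Σ_f) be a GSVD factorization of (R_s, R_f), let R = [R_s R_f], and let μ > 0. Then X·(XᵀX + μI)⁻¹·Xᵀ = X·Xᵀ·(X·Xᵀ + μI)⁻¹ = R·Rᵀ·(R·Rᵀ + μI)⁻¹. -/
/-!
Write `Ds = [[Σs, 0], [0, I]]` and `Df = [[Σf], [0]]`. Orthogonality of `Us` and `Uf` gives
`Rs Rsᵀ = X Ds Dsᵀ Xᵀ` and `Rf Rfᵀ = X Df Dfᵀ Xᵀ`, and `Σs² + Σf² = I` makes `Ds Dsᵀ + Df Dfᵀ = I`,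
so `R Rᵀ = X Xᵀ`. The remaining identity is the push-through identity
`(XᵀX + μI)⁻¹ Xᵀ = Xᵀ (XXᵀ + μI)⁻¹`, obtained from `Xᵀ (XXᵀ + μI) = (XᵀX + μI) Xᵀ`; both
regularised Gram matrices are positive definite, hence invertible.
-/

open Matrix

namespace Matrix

theorem inv_mul_eq_mul_inv_of_mul_eq_mul {m n α : Type*} [Fintype m] [Fintype n] [DecidableEq m]
    [DecidableEq n] [CommRing α] {B : Matrix m n α} {M : Matrix n n α} {N : Matrix m m α}
    (hM : IsUnit M) (hN : IsUnit N) (h : B * M = N * B) :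
    N⁻¹ * B = B * M⁻¹ := by
  have hM' := (isUnit_iff_isUnit_det M).mp hM
  have hN' := (isUnit_iff_isUnit_det N).mp hN
  calc N⁻¹ * B = N⁻¹ * (B * M) * M⁻¹ := by
        rw [Matrix.mul_assoc, Matrix.mul_assoc, mul_nonsing_inv _ hM', Matrix.mul_one]
    _ = B * M⁻¹ := by rw [h, ← Matrix.mul_assoc, nonsing_inv_mul _ hN', Matrix.one_mul]

theorem posDef_transpose_mul_self_add_smul_one {m n : Type*} [Fintype m] [Fintype n]
    [DecidableEq n] (A : Matrix m n ℝ) {μ : ℝ} (hμ : 0 < μ) :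
    (Aᵀ * A + μ • (1 : Matrix n n ℝ)).PosDef :=
  PosDef.posSemidef_add (by simpa using posSemidef_conjTranspose_mul_self A)
    (by simpa [smul_one_eq_diagonal] using fun _ => hμ)

theorem mul_inv_transpose_mul_self_add_smul_one_mul_transpose {m n : Type*} [Fintype m]
    [Fintype n] [DecidableEq m] [DecidableEq n] (A : Matrix m n ℝ) {μ : ℝ} (hμ : 0 < μ) :
    A * (Aᵀ * A + μ • (1 : Matrix n n ℝ))⁻¹ * Aᵀ =
      A * Aᵀ * (A * Aᵀ + μ • (1 : Matrix m m ℝ))⁻¹ := by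
  have hN := (posDef_transpose_mul_self_add_smul_one A hμ).isUnit
  have hM := (posDef_transpose_mul_self_add_smul_one Aᵀ hμ).isUnit
  rw [transpose_transpose] at hM
  have push : Aᵀ * (A * Aᵀ + μ • 1) = (Aᵀ * A + μ • 1) * Aᵀ := by
    simp only [Matrix.mul_add, Matrix.add_mul, Matrix.mul_smul, Matrix.smul_mul, Matrix.mul_one,
      Matrix.one_mul, Matrix.mul_assoc]
  rw [Matrix.mul_assoc A, Matrix.mul_assoc A, inv_mul_eq_mul_inv_of_mul_eq_mul hM hN push]

theorem mul_mul_transpose_mul_transpose_of_transpose_mul_self_eq_one {l m n α : Type*}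
    [Fintype l] [DecidableEq l] [Fintype n] [CommRing α] (X : Matrix m n α) (D : Matrix n l α)
    {U : Matrix l l α} (hU : Uᵀ * U = 1) :
    X * D * Uᵀ * (X * D * Uᵀ)ᵀ = X * (D * Dᵀ) * Xᵀ := by
  simp only [transpose_mul, transpose_transpose, Matrix.mul_assoc]
  rw [← Matrix.mul_assoc Uᵀ, hU, Matrix.one_mul]

theorem fromCols_mul_transpose_fromCols {m n₁ n₂ α : Type*} [Fintype n₁] [Fintype n₂]
    [CommRing α] (A₁ : Matrix m n₁ α) (A₂ : Matrix m n₂ α) :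
    fromCols A₁ A₂ * (fromCols A₁ A₂)ᵀ = A₁ * A₁ᵀ + A₂ * A₂ᵀ := by
  rw [transpose_fromCols, fromCols_mul_fromRows]

end Matrix

theorem gsvd_gram_add_eq_one {p k α : Type*} [Fintype p] [Fintype k] [DecidableEq p]
    [DecidableEq k] [CommRing α] {σs σf : p → α} (hσ : ∀ i, σs i ^ 2 + σf i ^ 2 = 1) :
    fromBlocks (diagonal σs) 0 0 (1 : Matrix k k α) * (fromBlocks (diagonal σs) 0 0 1)ᵀ +
      fromRows (diagonal σf) (0 : Matrix k p α) * (fromRows (diagonal σf) 0)ᵀ = 1 := by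
  rw [fromBlocks_transpose, fromBlocks_multiply, transpose_fromRows, fromRows_mul_fromCols]
  simp only [diagonal_transpose, diagonal_mul_diagonal]
  simp [fromBlocks_add, ← sq, hσ]

theorem regularised_two_array_equals_single_array_general (nf k : ℕ)
    (Rs : Matrix (Fin nf ⊕ Fin k) (Fin nf ⊕ Fin k) ℝ)
    (Rf : Matrix (Fin nf ⊕ Fin k) (Fin nf) ℝ)
    (X Us : Matrix (Fin nf ⊕ Fin k) (Fin nf ⊕ Fin k) ℝ)
    (Uf : Matrix (Fin nf) (Fin nf) ℝ) (σs σf : Fin nf → ℝ)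
    (hUs : Usᵀ * Us = 1)
    (hUf : Ufᵀ * Uf = 1)
    (hσ : ∀ i, σs i ^ 2 + σf i ^ 2 = 1)
    (hRsX : Rs = X * fromBlocks (diagonal σs) 0 0 (1 : Matrix (Fin k) (Fin k) ℝ) * Usᵀ)
    (hRfX : Rf = X * fromRows (diagonal σf) (0 : Matrix (Fin k) (Fin nf) ℝ) * Ufᵀ)
    (μ : ℝ) (hμ : 0 < μ) :
    X * (Xᵀ * X + μ • (1 : Matrix (Fin nf ⊕ Fin k) (Fin nf ⊕ Fin k) ℝ))⁻¹ * Xᵀ =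
      X * Xᵀ * (X * Xᵀ + μ • (1 : Matrix (Fin nf ⊕ Fin k) (Fin nf ⊕ Fin k) ℝ))⁻¹ ∧
    X * (Xᵀ * X + μ • (1 : Matrix (Fin nf ⊕ Fin k) (Fin nf ⊕ Fin k) ℝ))⁻¹ * Xᵀ =
      fromCols Rs Rf * (fromCols Rs Rf)ᵀ *
        (fromCols Rs Rf * (fromCols Rs Rf)ᵀ +
          μ • (1 : Matrix (Fin nf ⊕ Fin k) (Fin nf ⊕ Fin k) ℝ))⁻¹ := by
  have push := mul_inv_transpose_mul_self_add_smul_one_mul_transpose X hμ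
  have gram : fromCols Rs Rf * (fromCols Rs Rf)ᵀ = X * Xᵀ := by
    rw [fromCols_mul_transpose_fromCols, hRsX, hRfX,
      mul_mul_transpose_mul_transpose_of_transpose_mul_self_eq_one X _ hUs,
      mul_mul_transpose_mul_transpose_of_transpose_mul_self_eq_one X _ hUf,
      ← Matrix.add_mul, ← Matrix.mul_add, gsvd_gram_add_eq_one hσ, Matrix.mul_one]
  exact ⟨push, gram ▸ push⟩

/-- With `(X, Us, Uf, Σs, Σf)` a GSVD factorization of `(Rs, Rf)`,
`R = [Rs  Rf]` and `μ > 0`: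
`X·(XᵀX + μI)⁻¹·Xᵀ = X·Xᵀ·(X·Xᵀ + μI)⁻¹ = R·Rᵀ·(R·Rᵀ + μI)⁻¹`. -/
theorem regularised_two_array_equals_single_array (nf k : ℕ)
    (Rs : Matrix (Fin nf ⊕ Fin k) (Fin nf ⊕ Fin k) ℝ)
    (Rf : Matrix (Fin nf ⊕ Fin k) (Fin nf) ℝ)
    (hRs : Rs.rank = nf + k) (hRf : Rf.rank = nf)
    (X Us : Matrix (Fin nf ⊕ Fin k) (Fin nf ⊕ Fin k) ℝ)
    (Uf : Matrix (Fin nf) (Fin nf) ℝ) (σs σf : Fin nf → ℝ)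
    (hX : IsUnit X)
    (hUs : Usᵀ * Us = 1)
    (hUf : Ufᵀ * Uf = 1)
    (hσs : ∀ i, 0 < σs i)
    (hσf : ∀ i, 0 < σf i)
    (hσ : ∀ i, σs i ^ 2 + σf i ^ 2 = 1)
    (hRsX : Rs = X * fromBlocks (diagonal σs) 0 0 (1 : Matrix (Fin k) (Fin k) ℝ) * Usᵀ)
    (hRfX : Rf = X * fromRows (diagonal σf) (0 : Matrix (Fin k) (Fin nf) ℝ) * Ufᵀ)
    (μ : ℝ) (hμ : 0 < μ) :
    X * (Xᵀ * X + μ • (1 : Matrix (Fin nf ⊕ Fin k) (Fin nf ⊕ Fin k) ℝ))⁻¹ * Xᵀ =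
      X * Xᵀ * (X * Xᵀ + μ • (1 : Matrix (Fin nf ⊕ Fin k) (Fin nf ⊕ Fin k) ℝ))⁻¹ ∧
    X * (Xᵀ * X + μ • (1 : Matrix (Fin nf ⊕ Fin k) (Fin nf ⊕ Fin k) ℝ))⁻¹ * Xᵀ =
      fromCols Rs Rf * (fromCols Rs Rf)ᵀ *
        (fromCols Rs Rf * (fromCols Rs Rf)ᵀ +
          μ • (1 : Matrix (Fin nf ⊕ Fin k) (Fin nf ⊕ Fin k) ℝ))⁻¹ :=
  regularised_two_array_equals_single_array_general nf k Rs Rf X Us Uf σs σf hUs hUf hσ hRsX hRfX μ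
    hμ
end

section
/- Let X be an invertible real n×n matrix with Gram matrix eigendecomposition XᵀX = V·diag(d_1,…,d_n)·Vᵀ (V orthogonal, d_i > 0), let λ > 0 and μ ≥ 0. Then for every real s ≠ 0, det(I + μ·(XᵀX)⁻¹ + (λ/s)·I) = 0 if and only if s = −λ·d_i/(d_i+μ) for some i ∈ {1,…,n}. -/
open Matrix

/-- **Closed-loop poles of the regularised design.** For invertible `X` with
`XᵀX = V·diag(d₁,…,dₙ)·Vᵀ` (`V` orthogonal, `dᵢ > 0`), `λ > 0` and `μ ≥ 0`,
for every real `s ≠ 0`: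
`det(I + μ(XᵀX)⁻¹ + (λ/s)·I) = 0 ↔ s = −λ·dᵢ/(dᵢ+μ)` for some `i`. -/
theorem closed_loop_poles (n : ℕ)
    (X V : Matrix (Fin n) (Fin n) ℝ) (d : Fin n → ℝ)
    (hX : IsUnit X) (hV : Vᵀ * V = 1) (hd : ∀ i, 0 < d i)
    (hGram : Xᵀ * X = V * diagonal d * Vᵀ)
    (lam : ℝ) (hlam : 0 < lam) (μ : ℝ) (hμ : 0 ≤ μ) :
    ∀ s : ℝ, s ≠ 0 →
      (((1 : Matrix (Fin n) (Fin n) ℝ) + μ • (Xᵀ * X)⁻¹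
          + (lam / s) • (1 : Matrix (Fin n) (Fin n) ℝ)).det = 0 ↔
        ∃ i : Fin n, s = -(lam * d i / (d i + μ))) := by
  intro s hs
  have hVV : V * Vᵀ = 1 := mul_eq_one_comm.mp hV
  have hdne : ∀ i, d i ≠ 0 := fun i => (hd i).ne'
  set f : Fin n → ℝ := fun i => 1 + μ * (d i)⁻¹ + lam / s with hf
  have hinv : (Xᵀ * X)⁻¹ = V * diagonal (fun i => (d i)⁻¹) * Vᵀ := by
    apply inv_eq_right_inv
    rw [hGram]
    have : diagonal d * diagonal (fun i => (d i)⁻¹) = 1 := by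
      rw [diagonal_mul_diagonal]
      convert diagonal_one
      exact mul_inv_cancel₀ (hdne _)
    calc V * diagonal d * Vᵀ * (V * diagonal (fun i => (d i)⁻¹) * Vᵀ)
        = V * diagonal d * (Vᵀ * V) * diagonal (fun i => (d i)⁻¹) * Vᵀ := by
          simp only [Matrix.mul_assoc]
      _ = V * (diagonal d * diagonal (fun i => (d i)⁻¹)) * Vᵀ := by
          rw [hV]; simp only [Matrix.mul_one, Matrix.mul_assoc]
      _ = 1 := by rw [this, Matrix.mul_one, hVV]
  have hM : (1 : Matrix (Fin n) (Fin n) ℝ) + μ • (Xᵀ * X)⁻¹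
      + (lam / s) • (1 : Matrix (Fin n) (Fin n) ℝ)
      = V * diagonal f * Vᵀ := by
    rw [hinv]
    have key : ∀ (c : ℝ) (g : Fin n → ℝ),
        c • (V * diagonal g * Vᵀ) = V * diagonal (fun i => c * g i) * Vᵀ := by
      intro c g
      rw [← Matrix.smul_mul, ← Matrix.mul_smul, ← diagonal_smul]
      rfl
    have h1 : (1 : Matrix (Fin n) (Fin n) ℝ) = V * diagonal (fun _ => (1:ℝ)) * Vᵀ := by
      rw [diagonal_one, Matrix.mul_one, hVV]
    have h2 : μ • (V * diagonal (fun i => (d i)⁻¹) * Vᵀ)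
        = V * diagonal (fun i => μ * (d i)⁻¹) * Vᵀ := key μ _
    have h3 : (lam / s) • (1 : Matrix (Fin n) (Fin n) ℝ)
        = V * diagonal (fun _ => lam / s * 1) * Vᵀ := by
      rw [h1]; exact key _ _
    nth_rewrite 1 [h1]
    rw [h2, h3, ← Matrix.add_mul, ← Matrix.add_mul, ← Matrix.mul_add, ← Matrix.mul_add,
      diagonal_add, diagonal_add]
    simp only [mul_one, hf]
  have hdet1 : V.det * V.det = 1 := by
    have := congrArg Matrix.det hV
    rwa [det_mul, det_transpose, det_one] at this
  have hdetM : ((1 : Matrix (Fin n) (Fin n) ℝ) + μ • (Xᵀ * X)⁻¹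
      + (lam / s) • (1 : Matrix (Fin n) (Fin n) ℝ)).det = ∏ i, f i := by
    rw [hM, det_mul, det_mul, det_diagonal, det_transpose, mul_comm,
      ← mul_assoc, hdet1, one_mul]
  rw [hdetM, Finset.prod_eq_zero_iff]
  constructor
  · rintro ⟨i, -, hi⟩
    refine ⟨i, ?_⟩
    have hdμ : d i + μ ≠ 0 := (add_pos_of_pos_of_nonneg (hd i) hμ).ne'
    rw [hf] at hi
    field_simp [hdne i, hdμ] at hi ⊢
    linear_combination hi
  · rintro ⟨i, hi⟩
    refine ⟨i, Finset.mem_univ i, ?_⟩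
    have hdμ : d i + μ ≠ 0 := (add_pos_of_pos_of_nonneg (hd i) hμ).ne'
    rw [hf]
    field_simp [hdne i, hdμ] at hi ⊢
    linear_combination hi
end
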